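/- Scal∘Triv is a proper subset of Scal∘Poi, and both Scal∘Poi and Scal∘Triv are groups under composition of functions. -/

import Mathlib

/-- Spacetime points: elements of ℝ⁴. -/
abbrev Pt : Type := Fin 4 → ℝ

/-- Lightlike relatedness λ. -/
def lightlike (p q : Pt) : Prop :=
  (p 0 - q 0) ^ 2 = (p 1 - q 1) ^ 2 + (p 2 - q 2) ^ 2 + (p 3 - q 3) ^ 2

/-- Absolute simultaneity S. -/
def simul (p q : Pt) : Prop := p 0 = q 0

/-- Squared Minkowski length. -/
def sqMink (p : Pt) : ℝ := p 0 ^ 2 - p 1 ^ 2 - p 2 ^ 2 - p 3 ^ 2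

/-- Squared Euclidean length. -/
def sqEucl (p : Pt) : ℝ := p 0 ^ 2 + p 1 ^ 2 + p 2 ^ 2 + p 3 ^ 2

/-- Translations of ℝ⁴. -/
def IsTranslation (τ : Pt → Pt) : Prop := ∃ b : Pt, ∀ p, τ p = p + b

/-- Lorentz transformations: bijective linear maps preserving squared Minkowski length. -/
def IsLorentz (L : Pt → Pt) : Prop :=
  IsLinearMap ℝ L ∧ Function.Bijective L ∧ ∀ p, sqMink (L p) = sqMink p

/-- Poincaré transformations: translations composed with Lorentz transformations. -/
def IsPoincare (P : Pt → Pt) : Prop :=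
  ∃ τ L, IsTranslation τ ∧ IsLorentz L ∧ P = τ ∘ L

/-- Euclidean isometries: translations composed with bijective linear maps preserving
squared Euclidean length. -/
def IsEuclIsom (A : Pt → Pt) : Prop :=
  ∃ τ L, IsTranslation τ ∧ IsLinearMap ℝ L ∧ Function.Bijective L ∧
    (∀ p, sqEucl (L p) = sqEucl p) ∧ A = τ ∘ L

/-- Vertical lines: lines parallel to the time axis. -/
def IsVerticalLine (ℓ : Set Pt) : Prop :=
  ∃ q : Pt, ℓ = {p | p 1 = q 1 ∧ p 2 = q 2 ∧ p 3 = q 3}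

/-- Trivial transformations: Euclidean isometries taking vertical lines to vertical lines. -/
def IsTrivial (A : Pt → Pt) : Prop :=
  IsEuclIsom A ∧ ∀ ℓ, IsVerticalLine ℓ → IsVerticalLine (A '' ℓ)

/-- Scalings: maps `p ↦ a • p` with `a ≠ 0`. -/
def IsScaling (D : Pt → Pt) : Prop := ∃ a : ℝ, a ≠ 0 ∧ ∀ p, D p = a • p

/-- The point (1,0,0,0). -/
def unitTime : Pt := fun i => if i = 0 then 1 else 0

/-- Orthochronous maps: maps not changing the direction of time. -/
def Orthochronous (A : Pt → Pt) : Prop := A unitTime 0 > A 0 0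

/-- The set of Poincaré transformations. -/
def Poi : Set (Pt → Pt) := {P | IsPoincare P}

/-- The set of orthochronous Poincaré transformations. -/
def PoiUp : Set (Pt → Pt) := {P | IsPoincare P ∧ Orthochronous P}

/-- The set of trivial transformations. -/
def Triv : Set (Pt → Pt) := {T | IsTrivial T}

/-- The set of orthochronous trivial transformations. -/
def TrivUp : Set (Pt → Pt) := {T | IsTrivial T ∧ Orthochronous T}

/-- The set of scalings. -/
def Scal : Set (Pt → Pt) := {D | IsScaling D}

/-- Composition of two sets of functions: `H ∘ G = {h ∘ g : h ∈ H, g ∈ G}`. -/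
def setComp (H G : Set (Pt → Pt)) : Set (Pt → Pt) := {f | ∃ h ∈ H, ∃ g ∈ G, f = h ∘ g}

/-- A set of functions forms a group under composition. -/
def IsCompGroup (G : Set (Pt → Pt)) : Prop :=
  id ∈ G ∧ (∀ f ∈ G, ∀ g ∈ G, f ∘ g ∈ G) ∧
    ∀ f ∈ G, ∃ g ∈ G, f ∘ g = id ∧ g ∘ f = id

/-!
Every element of `Scal∘Poi` has the normal form `p ↦ a • L p + b` with `a ≠ 0` and `L` Lorentz, and
every element of `Scal∘Triv` the same form with `L` a Euclidean-orthogonal linear map sending the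
time axis to itself. Such an `L` changes the time coordinate at most by a sign, so it is Lorentz as
well. Scalars commute with linear maps, hence over any group of linear automorphisms the maps of
this normal form are closed under composition and inversion. A boost is Lorentz but tilts the time
axis, which separates the two sets.
-/

open Function Set

def linAut : Set (Pt → Pt) := {L | IsLinearMap ℝ L ∧ Bijective L}

lemma isCompGroup_linAut : IsCompGroup linAut := by
  refine ⟨⟨LinearMap.id.isLinear, bijective_id⟩, fun f hf g hg => ?_, fun f hf => ?_⟩
  · exact ⟨((IsLinearMap.mk' f hf.1).comp (IsLinearMap.mk' g hg.1)).isLinear, hf.2.comp hg.2⟩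
  · let E := LinearEquiv.ofBijective (IsLinearMap.mk' f hf.1) hf.2
    exact ⟨E.symm, ⟨E.symm.toLinearMap.isLinear, E.symm.bijective⟩,
      funext E.apply_symm_apply, funext E.symm_apply_apply⟩

lemma IsCompGroup.sep {G : Set (Pt → Pt)} (hG : IsCompGroup G) {P : (Pt → Pt) → Prop}
    (hid : P id) (hcomp : ∀ f ∈ G, ∀ g ∈ G, P f → P g → P (f ∘ g))
    (hinv : ∀ f ∈ G, ∀ g ∈ G, f ∘ g = id → g ∘ f = id → P f → P g) :
    IsCompGroup {f ∈ G | P f} := by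
  obtain ⟨hidG, hcompG, hinvG⟩ := hG
  refine ⟨⟨hidG, hid⟩, fun f hf g hg => ⟨hcompG f hf.1 g hg.1, hcomp f hf.1 g hg.1 hf.2 hg.2⟩,
    fun f hf => ?_⟩
  obtain ⟨g, hg, hfg, hgf⟩ := hinvG f hf.1
  exact ⟨g, ⟨hg, hinv f hf.1 g hg hfg hgf hf.2⟩, hfg, hgf⟩

lemma isCompGroup_linAut_preserving (q : Pt → ℝ) :
    IsCompGroup {L ∈ linAut | ∀ p, q (L p) = q p} := by
  refine isCompGroup_linAut.sep (fun _ => rfl) (fun f _ g _ hf hg p => (hf _).trans (hg p)) ?_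
  intro f _ g _ hfg _ hf p
  rw [← hf, ← comp_apply (f := f), hfg, id]

lemma isCompGroup_lorentz : IsCompGroup {L | IsLorentz L} := by
  convert isCompGroup_linAut_preserving sqMink using 1
  ext L
  exact and_assoc.symm

lemma smul_unitTime_coeff_ne_zero {L : Pt → Pt} (hL : L ∈ linAut) {c : ℝ}
    (hc : L unitTime = c • unitTime) : c ≠ 0 := by
  rintro rfl
  have : unitTime = 0 := hL.2.1 (by rw [hc, zero_smul, hL.1.map_zero])
  simpa [unitTime] using congrFun this 0

/-- The linear parts of trivial transformations, see `triv_eq_affineOf`. -/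
def trivLin : Set (Pt → Pt) :=
  {L ∈ {L ∈ linAut | ∀ p, sqEucl (L p) = sqEucl p} | ∃ c : ℝ, L unitTime = c • unitTime}

lemma isCompGroup_trivLin : IsCompGroup trivLin := by
  refine (isCompGroup_linAut_preserving sqEucl).sep ⟨1, (one_smul _ _).symm⟩ ?_ ?_
  · rintro f hf g - ⟨c, hc⟩ ⟨d, hd⟩
    exact ⟨d * c, by rw [comp_apply, hd, hf.1.1.map_smul, hc, smul_smul]⟩
  · rintro f hf g hg - hgf ⟨c, hc⟩
    have hc0 := smul_unitTime_coeff_ne_zero hf.1 hc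
    refine ⟨c⁻¹, ?_⟩
    calc g unitTime = g (f (c⁻¹ • unitTime)) := by
          rw [hf.1.1.map_smul, hc, smul_smul, inv_mul_cancel₀ hc0, one_smul]
      _ = c⁻¹ • unitTime := congrFun hgf _

lemma sqEucl_add_smul_unitTime (p : Pt) (t : ℝ) :
    sqEucl (p + t • unitTime) = sqEucl p + 2 * t * p 0 + t ^ 2 := by
  simp only [sqEucl, Pi.add_apply, Pi.smul_apply, smul_eq_mul, unitTime, Fin.isValue, ↓reduceIte,
    mul_one, one_ne_zero, mul_zero, add_zero, Fin.reduceEq]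
  ring

lemma sqMink_eq_sub_sqEucl (p : Pt) : sqMink p = 2 * p 0 ^ 2 - sqEucl p := by
  simp only [sqMink, sqEucl]
  ring

/-- Polarizing the Euclidean form against the time axis shows that such a map only rescales
the time coordinate by `±1`; the Minkowski form is then preserved as well. -/
lemma trivLin_subset_lorentz : trivLin ⊆ {L | IsLorentz L} := by
  rintro L ⟨⟨⟨hlin, hbij⟩, hL⟩, c, hc⟩
  refine ⟨hlin, hbij, fun p => ?_⟩
  have hc2 : c ^ 2 = 1 := by
    simpa [hc, sqEucl_add_smul_unitTime 0 c, sqEucl, unitTime] using hL unitTime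
  have hcross : c * L p 0 = p 0 := by
    have h := hL (p + (1 : ℝ) • unitTime)
    rw [hlin.map_add, hlin.map_smul, hc, sqEucl_add_smul_unitTime, smul_smul,
      sqEucl_add_smul_unitTime, hL] at h
    linear_combination h / 2 - hc2 / 2
  have htime : L p 0 ^ 2 = p 0 ^ 2 := by
    linear_combination (L p 0 ^ 2) * hc2.symm + (c * L p 0 + p 0) * hcross
  rw [sqMink_eq_sub_sqEucl, sqMink_eq_sub_sqEucl, htime, hL]

def affineOf (Q : Set (Pt → Pt)) : Set (Pt → Pt) :=
  {f | ∃ L ∈ Q, ∃ b : Pt, ∀ p, f p = L p + b}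

def scaledAffineOf (Q : Set (Pt → Pt)) : Set (Pt → Pt) :=
  {f | ∃ a : ℝ, a ≠ 0 ∧ ∃ L ∈ Q, ∃ b : Pt, ∀ p, f p = a • L p + b}

lemma scaledAffineOf_mono {Q Q' : Set (Pt → Pt)} (h : Q ⊆ Q') :
    scaledAffineOf Q ⊆ scaledAffineOf Q' := by
  rintro f ⟨a, ha, L, hL, b, hf⟩
  exact ⟨a, ha, L, h hL, b, hf⟩

lemma setComp_scal_affineOf (Q : Set (Pt → Pt)) :
    setComp Scal (affineOf Q) = scaledAffineOf Q := by
  ext f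
  constructor
  · rintro ⟨D, ⟨a, ha, hD⟩, g, ⟨L, hL, b, hg⟩, rfl⟩
    exact ⟨a, ha, L, hL, a • b, fun p => by rw [comp_apply, hD, hg, smul_add]⟩
  · rintro ⟨a, ha, L, hL, b, hf⟩
    refine ⟨(a • ·), ⟨a, ha, fun _ => rfl⟩, (L · + a⁻¹ • b), ⟨L, hL, a⁻¹ • b, fun _ => rfl⟩, ?_⟩
    funext p
    rw [hf, comp_apply, smul_add, smul_smul, mul_inv_cancel₀ ha, one_smul]

lemma isCompGroup_scaledAffineOf {Q : Set (Pt → Pt)} (hQ : IsCompGroup Q)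
    (hlin : ∀ L ∈ Q, IsLinearMap ℝ L) : IsCompGroup (scaledAffineOf Q) := by
  obtain ⟨hid, hcomp, hinv⟩ := hQ
  refine ⟨⟨1, one_ne_zero, id, hid, 0, fun p => by simp⟩, ?_, ?_⟩
  · rintro f ⟨a, ha, L, hL, b, hf⟩ g ⟨a', ha', L', hL', b', hg⟩
    refine ⟨a * a', mul_ne_zero ha ha', L ∘ L', hcomp L hL L' hL', a • L b' + b, fun p => ?_⟩
    rw [comp_apply, hf, hg, (hlin L hL).map_add, (hlin L hL).map_smul, smul_add, smul_smul,
      add_assoc, comp_apply]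
  · rintro f ⟨a, ha, L, hL, b, hf⟩
    obtain ⟨M, hM, hLM, hML⟩ := hinv L hL
    have hL' := hlin L hL
    have hM' := hlin M hM
    refine ⟨fun p => a⁻¹ • M p + -(a⁻¹ • M b),
      ⟨a⁻¹, inv_ne_zero ha, M, hM, -(a⁻¹ • M b), fun _ => rfl⟩, funext fun p => ?_,
      funext fun p => ?_⟩
    · have hLMp : ∀ x, L (M x) = x := congrFun hLM
      simp only [comp_apply, id, hf, hL'.map_add, hL'.map_neg, hL'.map_smul, hLMp, smul_add,
        smul_neg, smul_smul, mul_inv_cancel₀ ha, one_smul]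
      abel
    · have hMLp : ∀ x, M (L x) = x := congrFun hML
      simp only [comp_apply, id, hf, hM'.map_add, hM'.map_smul, hMLp, smul_add, smul_smul,
        inv_mul_cancel₀ ha, one_smul]
      abel

lemma poi_eq_affineOf : Poi = affineOf {L | IsLorentz L} := by
  ext f
  constructor
  · rintro ⟨τ, L, ⟨b, hτ⟩, hL, rfl⟩
    exact ⟨L, hL, b, fun p => hτ (L p)⟩
  · rintro ⟨L, hL, b, hf⟩
    exact ⟨(· + b), L, ⟨b, fun _ => rfl⟩, hL, funext hf⟩

def verticalLine (q : Pt) : Set Pt := {p | p 1 = q 1 ∧ p 2 = q 2 ∧ p 3 = q 3}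

lemma verticalLine_eq_range (q : Pt) :
    verticalLine q = range fun t : ℝ => q + t • unitTime := by
  ext p
  constructor
  · rintro ⟨h1, h2, h3⟩
    refine ⟨p 0 - q 0, funext fun i => ?_⟩
    fin_cases i <;> simp [unitTime, h1, h2, h3]
  · rintro ⟨t, rfl⟩
    simp [verticalLine, unitTime]

lemma image_verticalLine {L : Pt → Pt} (hL : IsLinearMap ℝ L) {c : ℝ} (hc0 : c ≠ 0)
    (hc : L unitTime = c • unitTime) (b q : Pt) :
    (L · + b) '' verticalLine q = verticalLine (L q + b) := by
  rw [verticalLine_eq_range, verticalLine_eq_range, ← range_comp,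
    ← (mul_right_surjective₀ hc0).range_comp fun t => L q + b + t • unitTime]
  congr 1
  funext t
  simp only [comp_apply, hL.map_add, hL.map_smul, hc, smul_smul]
  abel

/-- The image of the vertical line through the origin forces `L unitTime` to be vertical. -/
lemma triv_eq_affineOf : Triv = affineOf trivLin := by
  ext f
  constructor
  · rintro ⟨⟨τ, L, ⟨b, hτ⟩, hlin, hbij, hL, rfl⟩, hvert⟩
    obtain ⟨r, hr⟩ := hvert (verticalLine 0) ⟨0, rfl⟩
    change _ = verticalLine r at hr
    have hmem : ∀ p ∈ verticalLine 0, L p + b ∈ verticalLine r := fun p hp => by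
      rw [← hτ, ← hr]
      exact mem_image_of_mem _ hp
    have h0 := hmem 0 (by simp [verticalLine])
    have hu := hmem unitTime (by simp [verticalLine, unitTime])
    have hvu : L unitTime + b ∈ verticalLine (L 0 + b) :=
      ⟨hu.1.trans h0.1.symm, hu.2.1.trans h0.2.1.symm, hu.2.2.trans h0.2.2.symm⟩
    rw [verticalLine_eq_range, hlin.map_zero, zero_add] at hvu
    obtain ⟨c, hc⟩ := hvu
    refine ⟨L, ⟨⟨⟨hlin, hbij⟩, hL⟩, c, ?_⟩, b, fun p => hτ (L p)⟩
    simpa [add_comm b] using hc.symm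
  · rintro ⟨L, ⟨⟨⟨hlin, hbij⟩, hL⟩, c, hc⟩, b, hf⟩
    have hc0 := smul_unitTime_coeff_ne_zero ⟨hlin, hbij⟩ hc
    rw [show f = (L · + b) from funext hf]
    refine ⟨⟨(· + b), L, ⟨b, fun _ => rfl⟩, hlin, hbij, hL, rfl⟩, ?_⟩
    rintro ℓ ⟨q, rfl⟩
    exact ⟨L q + b, image_verticalLine hlin hc0 hc b q⟩

/-- The boost of velocity `3/5` along the first spatial axis (`γ = 5/4`, `γ v = 3/4`). -/
noncomputable def boost (p : Pt) : Pt :=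
  ![(5 * p 0 + 3 * p 1) / 4, (3 * p 0 + 5 * p 1) / 4, p 2, p 3]

lemma isLorentz_boost : IsLorentz boost := by
  refine ⟨⟨fun p q => ?_, fun a p => ?_⟩, ?_, fun p => ?_⟩
  · ext i
    fin_cases i <;> simp only [boost, Pi.add_apply, Fin.isValue, Fin.zero_eta, Fin.mk_one,
      Fin.reduceFinMk, Matrix.cons_val_zero, Matrix.cons_val_one, Matrix.cons_val] <;> ring
  · ext i
    fin_cases i <;> simp only [boost, Pi.smul_apply, smul_eq_mul, Fin.isValue, Fin.zero_eta,
      Fin.mk_one, Fin.reduceFinMk, Matrix.cons_val_zero, Matrix.cons_val_one, Matrix.cons_val] <;>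
      ring
  · refine bijective_iff_has_inverse.mpr
      ⟨fun p => ![(5 * p 0 - 3 * p 1) / 4, (5 * p 1 - 3 * p 0) / 4, p 2, p 3],
        fun p => ?_, fun p => ?_⟩ <;>
    · ext i
      fin_cases i <;> simp only [boost, Fin.isValue, Fin.zero_eta, Fin.mk_one, Fin.reduceFinMk,
        Matrix.cons_val_zero, Matrix.cons_val_one, Matrix.cons_val] <;> ring
  · simp only [sqMink, boost, Fin.isValue, Matrix.cons_val_zero, Matrix.cons_val_one,
      Matrix.cons_val]
    ring

lemma boost_not_mem_scaledAffineOf_trivLin : boost ∉ scaledAffineOf trivLin := by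
  rintro ⟨a, -, L, ⟨⟨⟨hlin, -⟩, -⟩, c, hc⟩, b, hf⟩
  have hb : b 1 = 0 := by simpa [boost, hlin.map_zero] using (congrFun (hf 0) 1).symm
  simpa [boost, unitTime, hc, hb] using congrFun (hf unitTime) 1

/-- Scal∘Triv ⊊ Scal∘Poi, and both Scal∘Poi and Scal∘Triv form groups under
composition. -/
theorem scal_triv_ssubset_scal_poi_and_groups :
    setComp Scal Triv ⊂ setComp Scal Poi ∧
      IsCompGroup (setComp Scal Poi) ∧ IsCompGroup (setComp Scal Triv) := by
  rw [poi_eq_affineOf, triv_eq_affineOf, setComp_scal_affineOf, setComp_scal_affineOf]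
  have hsub := scaledAffineOf_mono trivLin_subset_lorentz
  refine ⟨(ssubset_iff_of_subset hsub).mpr ⟨boost, ?_, boost_not_mem_scaledAffineOf_trivLin⟩,
    isCompGroup_scaledAffineOf isCompGroup_lorentz fun L hL => hL.1,
    isCompGroup_scaledAffineOf isCompGroup_trivLin fun L hL => hL.1.1.1⟩
  exact ⟨1, one_ne_zero, boost, isLorentz_boost, 0, fun p => by simp⟩
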